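/- arXiv:2002.01532 — 3 statements merged into one kernel-verified Lean document; each statement's English description precedes it below -/
import Mathlib

section
/- Every derivation on a C*-algebra A of bounded operators on a Hilbert space H that contains all compact operators on H is spatial: there exists a bounded operator d on H such that δ(a) = ad - da for all a in A. -/
/-!
Fix a unit vector `ξ`. The rank-one operators `x ⊗ ξ* = rankOne x ξ` are compact, hence lie in `A`,
and `D x := δ (x ⊗ ξ*) ξ` is a bounded operator. Since `a (x ⊗ ξ*) = (a x) ⊗ ξ*` and
`(x ⊗ ξ*) ξ = x`, evaluating the Leibniz rule for `a` and `x ⊗ ξ*` at `ξ` gives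
`D (a x) = a (D x) + δ a x`, that is `δ a = D a - a D`; so `d = -D` works.
-/

open ContinuousLinearMap InnerProductSpace

theorem InnerProductSpace.isCompactOperator_rankOne {𝕜 E F : Type*} [RCLike 𝕜]
    [SeminormedAddCommGroup E] [InnerProductSpace 𝕜 E] [SeminormedAddCommGroup F]
    [InnerProductSpace 𝕜 F] (x : E) (y : F) : IsCompactOperator (rankOne 𝕜 x y) :=
  (isCompactOperator_of_locallyCompactSpace_dom (innerSL 𝕜 y)).clm_comp (toSpanSingleton 𝕜 x)

namespace Subalgebra

variable {𝕜 E : Type*} [RCLike 𝕜] [NormedAddCommGroup E] [InnerProductSpace 𝕜 E]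
  (A : Subalgebra 𝕜 (E →L[𝕜] E)) {ξ : E} (hξ : ∀ x, rankOne 𝕜 x ξ ∈ A)

noncomputable def rankOneL : E →L[𝕜] A where
  toFun x := ⟨rankOne 𝕜 x ξ, hξ x⟩
  map_add' x y := Subtype.ext (by simp)
  map_smul' c x := Subtype.ext (by simp)
  cont := by fun_prop

@[simp] lemma coe_rankOneL_apply (x : E) : (A.rankOneL hξ x : E →L[𝕜] E) = rankOne 𝕜 x ξ := rfl

lemma mul_rankOneL (a : A) (x : E) : a * A.rankOneL hξ x = A.rankOneL hξ ((a : E →L[𝕜] E) x) :=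
  Subtype.ext (comp_rankOne x ξ (a : E →L[𝕜] E))

noncomputable def derivationImplementer (δ : A →L[𝕜] A) : E →L[𝕜] E :=
  apply 𝕜 E ξ ∘L A.toSubmodule.subtypeL ∘L δ ∘L A.rankOneL hξ

lemma derivationImplementer_apply (δ : A →L[𝕜] A) (x : E) :
    A.derivationImplementer hξ δ x = (δ (A.rankOneL hξ x) : E →L[𝕜] E) ξ := rfl

variable {A} {δ : A →L[𝕜] A} (hδ : ∀ a b : A, δ (a * b) = a * δ b + δ a * b)
include hδ

theorem derivationImplementer_apply_coe_apply (hξ₁ : ‖ξ‖ = 1) (a : A) (x : E) :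
    A.derivationImplementer hξ δ ((a : E →L[𝕜] E) x) =
      (a : E →L[𝕜] E) (A.derivationImplementer hξ δ x) + (δ a : E →L[𝕜] E) x := by
  rw [derivationImplementer_apply, derivationImplementer_apply, ← mul_rankOneL, hδ]
  simp [hξ₁]

theorem coe_derivation_eq_commutator (hξ₁ : ‖ξ‖ = 1) (a : A) :
    (δ a : E →L[𝕜] E) =
      A.derivationImplementer hξ δ * a - a * A.derivationImplementer hξ δ := by
  ext x
  simp [derivationImplementer_apply_coe_apply hξ hδ hξ₁]

end Subalgebra

theorem derivation_spatial_of_contains_compacts_general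
    {H : Type*} [NormedAddCommGroup H] [InnerProductSpace ℂ H] [CompleteSpace H]
    (A : StarSubalgebra ℂ (H →L[ℂ] H))
    (hK : ∀ k : H →L[ℂ] H, IsCompactOperator k → k ∈ A)
    (δ : A →L[ℂ] A)
    (hδ : ∀ a b : A, δ (a * b) = a * δ b + δ a * b) :
    ∃ d : H →L[ℂ] H, ∀ a : A, (δ a : H →L[ℂ] H) = (a : H →L[ℂ] H) * d - d * (a : H →L[ℂ] H) := by
  rcases subsingleton_or_nontrivial H with hH | hH
  · exact ⟨0, fun a => Subsingleton.elim _ _⟩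
  obtain ⟨ξ, hξ₁⟩ := exists_norm_eq H zero_le_one
  have hξ : ∀ x, rankOne ℂ x ξ ∈ A.toSubalgebra := fun x => hK _ (isCompactOperator_rankOne x ξ)
  refine ⟨-A.toSubalgebra.derivationImplementer hξ δ, fun a => ?_⟩
  rw [Subalgebra.coe_derivation_eq_commutator hξ hδ hξ₁ a]
  noncomm_ring

/-- Every (bounded) derivation on a concrete C*-algebra `A ⊆ B(H)` containing all
compact operators is spatial: there is `d ∈ B(H)` with `δ(a) = a d - d a` for all `a ∈ A`. -/
theorem derivation_spatial_of_contains_compacts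
    {H : Type*} [NormedAddCommGroup H] [InnerProductSpace ℂ H] [CompleteSpace H]
    (A : StarSubalgebra ℂ (H →L[ℂ] H)) (hA : IsClosed (A : Set (H →L[ℂ] H)))
    (hK : ∀ k : H →L[ℂ] H, IsCompactOperator k → k ∈ A)
    (δ : A →L[ℂ] A)
    (hδ : ∀ a b : A, δ (a * b) = a * δ b + δ a * b) :
    ∃ d : H →L[ℂ] H, ∀ a : A, (δ a : H →L[ℂ] H) = (a : H →L[ℂ] H) * d - d * (a : H →L[ℂ] H) :=
  derivation_spatial_of_contains_compacts_general A hK δ hδ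
end

section
/- Let Φ : ℓ∞(G, B(H)) → B(H) be the extension of an invariant mean on an amenable discrete group G via the duality B(H) = (L¹(H))*. Then Φ is a bimodule map over B(H): for every a ∈ ℓ∞(G, B(H)) and every c ∈ B(H), one has c·Φ(a) = Φ(g ↦ c·a(g)) and Φ(a)·c = Φ(g ↦ a(g)·c). -/
open scoped ComplexInnerProductSpace

theorem exists_norm_mul_left_le {ι R : Type*} [NonUnitalSeminormedRing R] (c : R) {a : ι → R}
    (ha : ∃ C, ∀ i, ‖a i‖ ≤ C) : ∃ C, ∀ i, ‖c * a i‖ ≤ C := by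
  obtain ⟨C, hC⟩ := ha
  exact ⟨‖c‖ * C, fun i => (norm_mul_le _ _).trans (by gcongr; exact hC i)⟩

theorem exists_norm_mul_right_le {ι R : Type*} [NonUnitalSeminormedRing R] (c : R) {a : ι → R}
    (ha : ∃ C, ∀ i, ‖a i‖ ≤ C) : ∃ C, ∀ i, ‖a i * c‖ ≤ C := by
  obtain ⟨C, hC⟩ := ha
  exact ⟨C * ‖c‖, fun i => (norm_mul_le _ _).trans (by gcongr; exact hC i)⟩

section Averaging

variable {G H : Type*} [NormedAddCommGroup H] [InnerProductSpace ℂ H]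
  {μ : (G → ℂ) →ₗ[ℂ] ℂ} {Φ : (G → (H →L[ℂ] H)) → (H →L[ℂ] H)}

theorem averaging_mul_right
    (hΦ : ∀ a : G → (H →L[ℂ] H), (∃ C, ∀ g, ‖a g‖ ≤ C) →
      ∀ ξ η : H, ⟪η, Φ a ξ⟫ = μ (fun g => ⟪η, a g ξ⟫))
    {a : G → (H →L[ℂ] H)} (ha : ∃ C, ∀ g, ‖a g‖ ≤ C) (c : H →L[ℂ] H) :
    Φ a * c = Φ (fun g => a g * c) :=
  ContinuousLinearMap.ext fun ξ => ext_inner_left ℂ fun η => by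
    rw [mul_apply_eq_comp, hΦ a ha, hΦ _ (exists_norm_mul_right_le c ha)]
    rfl

-- Moving `c` across the pairing turns the vector state `η` into `c† η`.
theorem mul_averaging [CompleteSpace H]
    (hΦ : ∀ a : G → (H →L[ℂ] H), (∃ C, ∀ g, ‖a g‖ ≤ C) →
      ∀ ξ η : H, ⟪η, Φ a ξ⟫ = μ (fun g => ⟪η, a g ξ⟫))
    {a : G → (H →L[ℂ] H)} (ha : ∃ C, ∀ g, ‖a g‖ ≤ C)
    (c : H →L[ℂ] H) : c * Φ a = Φ (fun g => c * a g) :=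
  ContinuousLinearMap.ext fun ξ => ext_inner_left ℂ fun η => by
    simp only [mul_apply_eq_comp, ← ContinuousLinearMap.adjoint_inner_left,
      hΦ a ha, hΦ _ (exists_norm_mul_left_le c ha)]

end Averaging

theorem averaging_is_bimodule_map_general
    (G : Type*) {H : Type*} [NormedAddCommGroup H] [InnerProductSpace ℂ H]
    [CompleteSpace H]
    (μ : (G → ℂ) →ₗ[ℂ] ℂ)
    (Φ : (G → (H →L[ℂ] H)) → (H →L[ℂ] H))
    (hΦ : ∀ a : G → (H →L[ℂ] H), (∃ C, ∀ g, ‖a g‖ ≤ C) →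
      ∀ ξ η : H, ⟪η, Φ a ξ⟫ = μ (fun g => ⟪η, a g ξ⟫)) :
    ∀ (a : G → (H →L[ℂ] H)) (c : H →L[ℂ] H), (∃ C, ∀ g, ‖a g‖ ≤ C) →
      c * Φ a = Φ (fun g => c * a g) ∧ Φ a * c = Φ (fun g => a g * c) :=
  fun _ c ha => ⟨mul_averaging hΦ ha c, averaging_mul_right hΦ ha c⟩

/-- The averaging map `Φ` on `ℓ∞(G, B(H))` coming from an invariant mean (via the duality
with trace-class operators, here expressed through its pairing with vector states) is a
bimodule map over `B(H)`: `c Φ(a) = Φ(g ↦ c a(g))` and `Φ(a) c = Φ(g ↦ a(g) c)`. -/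
theorem averaging_is_bimodule_map
    (G : Type*) [Group G] {H : Type*} [NormedAddCommGroup H] [InnerProductSpace ℂ H]
    [CompleteSpace H]
    (μ : (G → ℂ) →ₗ[ℂ] ℂ)
    (hμ1 : μ (fun _ => (1 : ℂ)) = 1)
    (hμc : ∀ (f : G → ℂ) (C : ℝ), (∀ g, ‖f g‖ ≤ C) → ‖μ f‖ ≤ C)
    (hμinv : ∀ (f : G → ℂ), (∃ C, ∀ h, ‖f h‖ ≤ C) → ∀ g : G, μ (fun h => f (h * g)) = μ f)
    (Φ : (G → (H →L[ℂ] H)) → (H →L[ℂ] H))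
    (hΦ : ∀ a : G → (H →L[ℂ] H), (∃ C, ∀ g, ‖a g‖ ≤ C) →
      ∀ ξ η : H, ⟪η, Φ a ξ⟫ = μ (fun g => ⟪η, a g ξ⟫)) :
    ∀ (a : G → (H →L[ℂ] H)) (c : H →L[ℂ] H), (∃ C, ∀ g, ‖a g‖ ≤ C) →
      c * Φ a = Φ (fun g => c * a g) ∧ Φ a * c = Φ (fun g => a g * c) :=
  averaging_is_bimodule_map_general G μ Φ hΦ
end

section
/- Let X be a metric space and r ≥ 0. If a ∈ ℓ∞(G, B(ℓ²(X))) is such that every operator a(g) has propagation at most r, then Φ(a) also has propagation at most r, where Φ is the averaging map coming from an invariant mean on the discrete group G. -/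
open scoped ComplexInnerProductSpace

noncomputable section

abbrev L2 (X : Type*) := lp (fun _ : X => ℂ) 2

def dvec {X : Type*} [DecidableEq X] (x : X) : L2 X := lp.single 2 x 1

def entry {X : Type*} [DecidableEq X] (a : L2 X →L[ℂ] L2 X) (x y : X) : ℂ :=
  ⟪dvec x, a (dvec y)⟫

def HasPropLE {X : Type*} [MetricSpace X] [DecidableEq X]
    (a : L2 X →L[ℂ] L2 X) (r : ℝ) : Prop :=
  ∀ x y : X, r < dist x y → entry a x y = 0

def RoeSet (X : Type*) [MetricSpace X] [DecidableEq X] : Set (L2 X →L[ℂ] L2 X) :=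
  closure {a | ∃ r : ℝ, 0 ≤ r ∧ HasPropLE a r}

def BddGeom (X : Type*) [MetricSpace X] : Prop :=
  ∀ r : ℝ, ∃ N : ℕ, ∀ x : X, (Metric.closedBall x r).Finite ∧ (Metric.closedBall x r).ncard ≤ N

theorem averaging_preserves_propagation_general
    (G : Type*) (X : Type*) [MetricSpace X] [DecidableEq X]
    (μ : (G → ℂ) →ₗ[ℂ] ℂ)
    (Φ : (G → (L2 X →L[ℂ] L2 X)) → (L2 X →L[ℂ] L2 X))
    (hΦ : ∀ a : G → (L2 X →L[ℂ] L2 X), (∃ C, ∀ g, ‖a g‖ ≤ C) →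
      ∀ ξ η : L2 X, ⟪η, Φ a ξ⟫ = μ (fun g => ⟪η, a g ξ⟫))
    (r : ℝ)
    (a : G → (L2 X →L[ℂ] L2 X)) (ha : ∃ C, ∀ g, ‖a g‖ ≤ C)
    (hprop : ∀ g : G, HasPropLE (a g) r) :
    HasPropLE (Φ a) r := by
  intro x y hxy
  calc entry (Φ a) x y = μ (fun g => entry (a g) x y) := hΦ a ha (dvec y) (dvec x)
    _ = μ 0 := congrArg μ (funext fun g => hprop g x y hxy)
    _ = 0 := map_zero μ

/-- Averaging over an invariant mean does not increase propagation: if every `a(g)` has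
propagation at most `r`, then so does `Φ(a)`. -/
theorem averaging_preserves_propagation
    (G : Type*) [Group G] (X : Type*) [MetricSpace X] [DecidableEq X]
    (μ : (G → ℂ) →ₗ[ℂ] ℂ)
    (hμ1 : μ (fun _ => (1 : ℂ)) = 1)
    (hμc : ∀ (f : G → ℂ) (C : ℝ), (∀ g, ‖f g‖ ≤ C) → ‖μ f‖ ≤ C)
    (hμinv : ∀ (f : G → ℂ), (∃ C, ∀ h, ‖f h‖ ≤ C) → ∀ g : G, μ (fun h => f (h * g)) = μ f)
    (Φ : (G → (L2 X →L[ℂ] L2 X)) → (L2 X →L[ℂ] L2 X))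
    (hΦ : ∀ a : G → (L2 X →L[ℂ] L2 X), (∃ C, ∀ g, ‖a g‖ ≤ C) →
      ∀ ξ η : L2 X, ⟪η, Φ a ξ⟫ = μ (fun g => ⟪η, a g ξ⟫))
    (r : ℝ) (hr : 0 ≤ r)
    (a : G → (L2 X →L[ℂ] L2 X)) (ha : ∃ C, ∀ g, ‖a g‖ ≤ C)
    (hprop : ∀ g : G, HasPropLE (a g) r) :
    HasPropLE (Φ a) r :=
  averaging_preserves_propagation_general G X μ Φ hΦ r a ha hprop
end
end
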